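/- E[min(N, G+1)] = 1/(1−ζ) if and only if P(N = ∞) = 1. (Theorem 2(4): the chance of satisfying the Büchi objective in the product MDP under a fixed strategy, i.e. the probability that infinitely many accepting transitions occur, is 1 if and only if the expected total reward in the augmented MDP under that strategy equals 1/(1−ζ).) -/

import Mathlib

open MeasureTheory ProbabilityTheory
open scoped ENNReal

/-- `ζ ^ n` for an extended natural number `n`, with the convention `ζ ^ ∞ = 0`. -/
noncomputable def epow (ζ : ℝ≥0∞) (n : ℕ∞) : ℝ≥0∞ :=
  if n = ⊤ then 0 else ζ ^ n.toNat

/-- `∑_{i=0}^{n-1} ζ ^ i` for an extended natural number `n`, where for `n = ∞`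
the sum is interpreted as the full geometric series `1 / (1 - ζ)`. -/
noncomputable def geomSum (ζ : ℝ≥0∞) (n : ℕ∞) : ℝ≥0∞ :=
  if n = ⊤ then (1 - ζ)⁻¹ else ∑ i ∈ Finset.range n.toNat, ζ ^ i

/-!
Writing `min(N, G+1) = ∑ₖ 𝟙[k < N] 𝟙[k ≤ G]` and using independence together with the
geometric tail `P(G ≥ k) = ζᵏ`, the expectation is `∑ₖ ζᵏ P(N > k)`. Each term is at most
`ζᵏ`, and `∑ₖ ζᵏ = 1/(1−ζ)` is finite with positive terms, so equality holds exactly when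
`P(N > k) = 1` for every `k`, i.e. when `N = ∞` almost surely.
-/

lemma ENat.toENNReal_eq_tsum_ite_lt (n : ℕ∞) :
    (n : ℝ≥0∞) = ∑' k : ℕ, if (k : ℕ∞) < n then 1 else 0 := by
  induction n using ENat.recTopCoe with
  | top => simp
  | coe m =>
    rw [tsum_eq_sum (s := Finset.range m) fun k hk => by simpa using hk]
    simp [Finset.sum_ite_of_true (fun k hk => Finset.mem_range.mp hk)]

theorem ENNReal.tsum_pow_mul_eq_inv_one_sub_iff {ζ : ℝ≥0∞} (hζ0 : ζ ≠ 0) (hζ1 : ζ < 1)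
    {p : ℕ → ℝ≥0∞} (hp : ∀ k, p k ≤ 1) :
    ∑' k, ζ ^ k * p k = (1 - ζ)⁻¹ ↔ ∀ k, p k = 1 := by
  refine ⟨fun h k => ?_, fun h => by simp [h, ENNReal.tsum_geometric]⟩
  by_contra hk
  have hlt : ζ ^ k * p k < ζ ^ k := by
    simpa using (ENNReal.mul_lt_mul_iff_right (pow_ne_zero k hζ0) (by finiteness)).2
      ((hp k).lt_of_ne hk)
  have := ENNReal.tsum_lt_tsum (h ▸ ENNReal.inv_ne_top.2 (tsub_pos_of_lt hζ1).ne')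
    (fun j => mul_le_of_le_one_right' (hp j)) hlt
  rw [h, ENNReal.tsum_geometric] at this
  exact this.false

section

variable {Ω : Type*} [MeasurableSpace Ω] {μ : Measure Ω}

theorem lintegral_enat_eq_tsum_measure_lt {X : Ω → ℕ∞} (hX : Measurable X) :
    ∫⁻ ω, (X ω : ℝ≥0∞) ∂μ = ∑' k : ℕ, μ {ω | (k : ℕ∞) < X ω} := by
  have hmeas (k : ℕ) : MeasurableSet {ω | (k : ℕ∞) < X ω} :=
    hX (.of_discrete (s := {n : ℕ∞ | (k : ℕ∞) < n}))
  simp_rw [ENat.toENNReal_eq_tsum_ite_lt]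
  rw [lintegral_tsum fun k => (measurable_const.ite (hmeas k) measurable_const).aemeasurable]
  congr 1 with k
  rw [← lintegral_indicator_one (hmeas k)]
  simp only [Set.indicator_apply, Set.mem_ofPred_eq, Pi.one_apply]

theorem measure_le_eq_pow_of_geometric {G : Ω → ℕ} (hG : Measurable G)
    {ζ : ℝ≥0∞} (hζ1 : ζ < 1) (hGeom : ∀ k : ℕ, μ {ω | G ω = k} = (1 - ζ) * ζ ^ k) (k : ℕ) :
    μ {ω | k ≤ G ω} = ζ ^ k := by
  have hunion : {ω | k ≤ G ω} = ⋃ j : ℕ, {ω | G ω = k + j} := by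
    ext ω
    simp only [Set.mem_ofPred_eq, Set.mem_iUnion]
    exact ⟨fun h => ⟨G ω - k, by omega⟩, fun ⟨j, hj⟩ => by omega⟩
  have hdisj : Pairwise (Function.onFun Disjoint fun j : ℕ => {ω | G ω = k + j}) :=
    fun i j hij => Set.disjoint_left.2 fun ω hi hj => hij (by simp_all)
  have h1ζ : 1 - ζ ≠ 0 := (tsub_pos_of_lt hζ1).ne'
  rw [hunion, measure_iUnion hdisj fun j => hG (measurableSet_singleton _)]
  simp_rw [hGeom, pow_add, ENNReal.tsum_mul_left, ENNReal.tsum_geometric]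
  rw [mul_left_comm, ENNReal.mul_inv_cancel h1ζ (by finiteness), mul_one]

theorem prob_eq_top_eq_one_iff [IsProbabilityMeasure μ] {N : Ω → ℕ∞} (hN : Measurable N) :
    μ {ω | N ω = ⊤} = 1 ↔ ∀ k : ℕ, μ {ω | (k : ℕ∞) < N ω} = 1 := by
  have hmeas (p : ℕ∞ → Prop) : Measurable fun ω => p (N ω) := Measurable.of_discrete.comp hN
  calc μ {ω | N ω = ⊤} = 1 ↔ ∀ᵐ ω ∂μ, N ω = ⊤ := (ae_iff_prob_eq_one (hmeas (· = ⊤))).symm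
    _ ↔ ∀ᵐ ω ∂μ, ∀ k : ℕ, (k : ℕ∞) < N ω := by simp_rw [ENat.eq_top_iff_forall_gt]
    _ ↔ ∀ k : ℕ, ∀ᵐ ω ∂μ, (k : ℕ∞) < N ω := ae_all_iff
    _ ↔ ∀ k : ℕ, μ {ω | (k : ℕ∞) < N ω} = 1 :=
      forall_congr' fun k => ae_iff_prob_eq_one (hmeas ((k : ℕ∞) < ·))

theorem lintegral_min_add_one_eq_tsum {ζ : ℝ≥0∞} (hζ1 : ζ < 1)
    {N : Ω → ℕ∞} (hN : Measurable N) {G : Ω → ℕ} (hG : Measurable G)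
    (hGeom : ∀ k : ℕ, μ {ω | G ω = k} = (1 - ζ) * ζ ^ k) (hIndep : IndepFun G N μ) :
    ∫⁻ ω, (↑(min (N ω) ((G ω : ℕ∞) + 1)) : ℝ≥0∞) ∂μ
      = ∑' k : ℕ, ζ ^ k * μ {ω | (k : ℕ∞) < N ω} := by
  rw [lintegral_enat_eq_tsum_measure_lt (by fun_prop)]
  congr 1 with k
  have hset : {ω | (k : ℕ∞) < min (N ω) ((G ω : ℕ∞) + 1)}
      = G ⁻¹' Set.Ici k ∩ N ⁻¹' {n | (k : ℕ∞) < n} := by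
    ext ω
    simp [ENat.lt_add_one_iff, and_comm]
  rw [hset, hIndep.measure_inter_preimage_eq_mul _ _ measurableSet_Ici .of_discrete]
  exact congrArg (· * _) (measure_le_eq_pow_of_geometric hG hζ1 hGeom k)

end

/-- `E[min(N, G+1)] = 1 / (1 − ζ)` if, and only if, `P(N = ∞) = 1`. -/
theorem expected_total_eq_iff_buchi_almost_sure
    {Ω : Type*} [MeasurableSpace Ω] (μ : Measure Ω) [IsProbabilityMeasure μ]
    (ζ : ℝ≥0∞) (hζ0 : 0 < ζ) (hζ1 : ζ < 1)
    (N : Ω → ℕ∞) (hN : Measurable N)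
    (G : Ω → ℕ) (hG : Measurable G)
    (hGeom : ∀ k : ℕ, μ {ω | G ω = k} = (1 - ζ) * ζ ^ k)
    (hIndep : IndepFun G N μ) :
    ∫⁻ ω, (↑(min (N ω) ((G ω : ℕ∞) + 1)) : ℝ≥0∞) ∂μ = (1 - ζ)⁻¹ ↔
      μ {ω | N ω = ⊤} = 1 := by
  rw [lintegral_min_add_one_eq_tsum hζ1 hN hG hGeom hIndep, prob_eq_top_eq_one_iff hN]
  exact ENNReal.tsum_pow_mul_eq_inv_one_sub_iff hζ0.ne' hζ1 fun _ => prob_le_one
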